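/- arXiv:1511.09291 — 3 statements merged into one kernel-verified Lean document; each statement's English description precedes it below -/
import Mathlib

section
/- Let d ≥ 3 and n ≥ 2 be integers. Let r, s, t be integers with 0 ≤ r ≤ s ≤ t, t ≥ 2, and r + (t - s) ≥ 1, and let m_1, ..., m_t be positive integers with m_1 + ... + m_t = n + 2. Then (1-d)^{n+2} ≠ 1 - r - d(t-s) + ∑_{i=1}^r (1-d)^{m_i}. -/
/-!
Put `e = d - 1 ≥ 2`, so the left side is `(-e) ^ (n + 2)`, of absolute value `e ^ (n + 2)`.
On the right, the constant `1 - r - d (t - s)` is `≤ 0` because `r + (t - s) ≥ 1`, so each of the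
`t` fixed components contributes at most `e ^ m i + 1` to its absolute value, and the right side
is at most `∑ e ^ m i + t - 1`. By convexity, `∑ e ^ m i` over `t` positive exponents with sum
`N = n + 2` is largest when all but one exponent are `1`, which gives the bound
`(e + 1) (t - 1) + e ^ (N - t + 1)`; this is `< e ^ N` as soon as `t ≥ 2`, `N ≥ 4` and `e ≥ 2`.
-/

open Finset

theorem le_sum_range_of_one_le {m : ℕ → ℕ} {t : ℕ} (hm : ∀ i < t, 1 ≤ m i) :
    t ≤ ∑ i ∈ range t, m i := by
  simpa using card_nsmul_le_sum (range t) m 1 fun i hi => hm i (mem_range.1 hi)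

section OrderedRing

variable {R : Type*} [CommRing R] [LinearOrder R] [IsStrictOrderedRing R]

theorem one_add_natCast_le_pow {e : R} (he : 2 ≤ e) (n : ℕ) : 1 + (n : R) ≤ e ^ n :=
  calc 1 + (n : R) ≤ 1 + n * (e - 1) := by nlinarith [(n.cast_nonneg : (0 : R) ≤ n)]
    _ ≤ (1 + (e - 1)) ^ n := one_add_mul_le_pow (by linarith) n
    _ = e ^ n := by rw [add_sub_cancel]

theorem pow_add_pow_le_pow_add_sub_one_add {e : R} (he : 1 ≤ e) {a b : ℕ} (ha : 1 ≤ a)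
    (hb : 1 ≤ b) : e ^ a + e ^ b ≤ e ^ (a + b - 1) + e := by
  obtain ⟨a, rfl⟩ := Nat.exists_eq_add_of_le' ha
  obtain ⟨b, rfl⟩ := Nat.exists_eq_add_of_le' hb
  have key : 0 ≤ e * ((e ^ a - 1) * (e ^ b - 1)) :=
    mul_nonneg (by linarith) <|
      mul_nonneg (sub_nonneg.2 (one_le_pow₀ he)) (sub_nonneg.2 (one_le_pow₀ he))
  rw [show a + 1 + (b + 1) - 1 = a + b + 1 by omega]
  linear_combination key

theorem sum_range_pow_le {e : R} (he : 1 ≤ e) {m : ℕ → ℕ} {t : ℕ} (ht : 1 ≤ t)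
    (hm : ∀ i < t, 1 ≤ m i) :
    ∑ i ∈ range t, e ^ m i ≤ e ^ (∑ i ∈ range t, m i - t + 1) + ((t : R) - 1) * e := by
  induction t, ht using Nat.le_induction with
  | base => simp [Nat.sub_add_cancel (hm 0 one_pos)]
  | succ t ht ih =>
    have hm' : ∀ i < t, 1 ≤ m i := fun i hi => hm i (by omega)
    have hsum := le_sum_range_of_one_le hm'
    have hmt := hm t (by omega)
    have merge := pow_add_pow_le_pow_add_sub_one_add he
      (a := ∑ i ∈ range t, m i - t + 1) (b := m t) (by omega) hmt
    rw [show ∑ i ∈ range t, m i - t + 1 + m t - 1 = ∑ i ∈ range t, m i + m t - (t + 1) + 1 by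
      omega] at merge
    rw [sum_range_succ, sum_range_succ]
    push_cast
    linarith [ih hm']

theorem add_one_mul_sub_one_add_pow_lt_pow {e : R} (he : 2 ≤ e) {t N : ℕ} (ht : 2 ≤ t)
    (htN : t ≤ N) (hN : 4 ≤ N) : (e + 1) * ((t : R) - 1) + e ^ (N - t + 1) < e ^ N := by
  obtain ⟨j, rfl⟩ := Nat.exists_eq_add_of_le' (show 1 ≤ t by omega)
  obtain ⟨k, rfl⟩ := Nat.exists_eq_add_of_le' htN
  rw [show k + (j + 1) - (j + 1) + 1 = k + 1 by omega, show k + (j + 1) = j + (k + 1) by omega]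
  push_cast
  rw [add_sub_cancel_right]
  rcases Nat.eq_zero_or_pos k with rfl | hk
  · simp only [zero_add, pow_one]
    obtain ⟨i, rfl⟩ := Nat.exists_eq_add_of_le' (show 3 ≤ j by omega)
    have he4 : 4 * e + 3 < e ^ 4 := by nlinarith [pow_le_pow_left₀ (by norm_num) he 3]
    calc (e + 1) * ↑(i + 3) + e = (e + 1) * i + (4 * e + 3) := by push_cast; ring
      _ < e ^ 4 * i + e ^ 4 := add_lt_add_of_le_of_lt (by gcongr; linarith) he4
      _ = (1 + i) * e ^ 4 := by ring
      _ ≤ e ^ i * e ^ 4 := by gcongr; exact one_add_natCast_le_pow he i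
      _ = e ^ (i + 3 + 1) := by ring
  · have hj : (1 : R) ≤ j := by exact_mod_cast (show 1 ≤ j by omega)
    have hk2 : e ^ 2 ≤ e ^ (k + 1) := pow_le_pow_right₀ (by linarith) (by omega)
    calc (e + 1) * j + e ^ (k + 1) < e ^ 2 * j + e ^ (k + 1) := by gcongr; nlinarith
      _ ≤ e ^ (k + 1) * j + e ^ (k + 1) := by gcongr
      _ ≤ (e ^ j - 1) * e ^ (k + 1) + e ^ (k + 1) := by
        rw [mul_comm]; gcongr; linarith [one_add_natCast_le_pow he j]
      _ = e ^ (j + (k + 1)) := by ring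

theorem abs_one_sub_sub_mul_add_sum_pow_le {d : R} (hd : 2 ≤ d) {r s t : ℕ} (hrs : r ≤ s)
    (hst : s ≤ t) (hne : 1 ≤ r + (t - s)) {m : ℕ → ℕ} (hm : ∀ i < t, 1 ≤ m i) :
    |1 - r - d * ((t : R) - s) + ∑ i ∈ range r, (1 - d) ^ m i| ≤
      ∑ i ∈ range t, (d - 1) ^ m i + ((t : R) - 1) := by
  set f : ℕ → R := fun i => (d - 1) ^ m i + 1
  have hf : ∀ i, 0 ≤ f i := fun i => add_nonneg (pow_nonneg (by linarith) _) zero_le_one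
  have hts : (t : R) - s = ((t - s : ℕ) : R) := (Nat.cast_sub hst).symm
  have hconst : |1 - r - d * ((t : R) - s)| = r + d * (t - s : ℕ) - 1 := by
    have : (1 : R) ≤ r + (t - s : ℕ) := by exact_mod_cast hne
    rw [hts, abs_of_nonpos (by nlinarith [((t - s : ℕ).cast_nonneg : (0 : R) ≤ _)])]
    ring
  have hpow : |∑ i ∈ range r, (1 - d) ^ m i| ≤ ∑ i ∈ range r, (d - 1) ^ m i :=
    (abs_sum_le_sum_abs _ _).trans_eq <| sum_congr rfl fun i _ => by
      rw [abs_pow, abs_sub_comm, abs_of_nonneg (by linarith)]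
  have hsplit : ∑ i ∈ range r, f i + (t - s : ℕ) * d ≤ ∑ i ∈ range t, f i := by
    rw [← sum_range_add_sum_Ico f hst, ← sum_range_add_sum_Ico f hrs, add_assoc]
    gcongr
    refine le_add_of_nonneg_of_le (sum_nonneg fun i _ => hf i) ?_
    simpa using card_nsmul_le_sum (Ico s t) f d fun i hi => by
      have := pow_le_pow_right₀ (a := d - 1) (by linarith) (hm i (mem_Ico.1 hi).2)
      simp only [f, pow_one] at this ⊢
      linarith
  have hf_sum : ∀ u : ℕ, ∑ i ∈ range u, f i = ∑ i ∈ range u, (d - 1) ^ m i + u := fun u => by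
    simp [f, sum_add_distrib]
  rw [hf_sum, hf_sum] at hsplit
  calc _ ≤ |1 - r - d * ((t : R) - s)| + |∑ i ∈ range r, (1 - d) ^ m i| := abs_add_le _ _
    _ ≤ _ := by rw [hconst]; linarith

end OrderedRing

theorem stmt_3 (d n r s t : ℕ) (hd : 3 ≤ d) (hn : 2 ≤ n)
    (hrs : r ≤ s) (hst : s ≤ t) (ht : 2 ≤ t) (hne : 1 ≤ r + (t - s))
    (m : ℕ → ℕ) (hm : ∀ i < t, 1 ≤ m i) (hsum : ∑ i ∈ Finset.range t, m i = n + 2) :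
    ((1 : ℤ) - d) ^ (n + 2) ≠
      1 - r - d * ((t : ℤ) - s) + ∑ i ∈ Finset.range r, ((1 : ℤ) - d) ^ (m i) := by
  intro h
  have he : (2 : ℤ) ≤ d - 1 := by omega
  have htN : t ≤ n + 2 := hsum ▸ le_sum_range_of_one_le hm
  have hrhs := abs_one_sub_sub_mul_add_sum_pow_le (d := (d : ℤ)) (by omega) hrs hst hne hm
  have hconvex := sum_range_pow_le (e := (d : ℤ) - 1) (by omega) (by omega) hm
  have hnum := add_one_mul_sub_one_add_pow_lt_pow he ht htN (by omega)
  rw [← h, abs_pow, abs_sub_comm, abs_of_nonneg (by omega)] at hrhs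
  rw [hsum] at hconvex
  linarith
end

section
/- Let N ≥ 3 be an integer and let ζ be a root of unity in the ring of integers of an algebraic closure of Q_ℓ (or in the complex numbers) such that ζ ≡ 1 modulo N (i.e., (ζ - 1)/N is an algebraic integer). Then ζ = 1. -/
/-!
Write `ζ - 1 = N δ` inside the number field `ℚ(ζ)`. Every conjugate of `ζ` has absolute value `1`,
so every conjugate of `δ` has absolute value at most `2 / N < 1`. A nonzero algebraic integer
has a conjugate of absolute value at least `1`, hence `δ = 0`.
-/

open NumberField IntermediateField

theorem NumberField.eq_one_of_pow_eq_one_of_sub_one_eq_nat_mul {K : Type*} [Field K]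
    [NumberField K] {ζ δ : K} {k N : ℕ} (hk : k ≠ 0) (hζ : ζ ^ k = 1) (hδ : IsIntegral ℤ δ)
    (hN : 2 < N) (h : ζ - 1 = N * δ) : ζ = 1 := by
  by_contra hζ1
  have hδ0 : δ ≠ 0 := by rintro rfl; simp_all [sub_eq_zero]
  obtain ⟨σ, hσδ⟩ : ∃ σ : K →+* ℂ, 1 ≤ ‖σ δ‖ :=
    exists_conjugate_one_le_norm (α := ⟨δ, hδ⟩) fun h ↦ hδ0 congr(RingOfIntegers.val $h)
  have hσζ : ‖σ ζ‖ = 1 := Complex.norm_eq_one_of_pow_eq_one (by rw [← map_pow, hζ, map_one]) hk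
  have hNσδ : (N : ℝ) * ‖σ δ‖ ≤ 2 := calc
    (N : ℝ) * ‖σ δ‖ = ‖σ ζ - 1‖ := by
      rw [← map_one σ, ← map_sub, h, map_mul, map_natCast, norm_mul, Complex.norm_natCast]
    _ ≤ ‖σ ζ‖ + ‖(1 : ℂ)‖ := norm_sub_le _ _
    _ = 2 := by rw [hσζ, norm_one]; norm_num
  have hN' : (2 : ℝ) < N := by exact_mod_cast hN
  nlinarith

theorem stmt_10_general (N : ℕ) (hN : 3 ≤ N) (ζ : ℂ)
    (hroot : ∃ k : ℕ, 1 ≤ k ∧ ζ ^ k = 1)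
    (hcong : ∃ δ : ℂ, IsIntegral ℤ δ ∧ ζ - 1 = (N : ℂ) * δ) :
    ζ = 1 := by
  obtain ⟨k, hk, hζk⟩ := hroot
  obtain ⟨δ, hδ, hζδ⟩ := hcong
  have : FiniteDimensional ℚ ℚ⟮ζ⟯ :=
    adjoin.finiteDimensional (IsIntegral.of_pow hk (hζk ▸ isIntegral_one))
  have : NumberField ℚ⟮ζ⟯ := {}
  have hζK : ζ ∈ ℚ⟮ζ⟯ := mem_adjoin_simple_self ℚ ζ
  have hδK : δ ∈ ℚ⟮ζ⟯ := by
    have hN0 : (N : ℂ) ≠ 0 := by exact_mod_cast (show N ≠ 0 by omega)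
    rw [show δ = (ζ - 1) / N by rw [hζδ]; field_simp]
    exact div_mem (sub_mem hζK (one_mem _)) (_root_.natCast_mem _ N)
  have hδK_int : IsIntegral ℤ (⟨δ, hδK⟩ : ℚ⟮ζ⟯) :=
    (isIntegral_algebraMap_iff Subtype.val_injective).mp hδ
  have hζK_root : (⟨ζ, hζK⟩ : ℚ⟮ζ⟯) ^ k = 1 := Subtype.ext hζk
  exact congrArg Subtype.val <| eq_one_of_pow_eq_one_of_sub_one_eq_nat_mul (by omega) hζK_root
    hδK_int (by omega) (Subtype.ext hζδ)

theorem stmt_10 (N : ℕ) (hN : 3 ≤ N) (ζ : ℂ) (hζ : IsIntegral ℤ ζ)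
    (hroot : ∃ k : ℕ, 1 ≤ k ∧ ζ ^ k = 1)
    (hcong : ∃ δ : ℂ, IsIntegral ℤ δ ∧ ζ - 1 = (N : ℂ) * δ) :
    ζ = 1 :=
  stmt_10_general N hN ζ hroot hcong
end

section
/- Let d ≥ 3, n ≥ 2 be integers and suppose r, s, t, m_1, ..., m_t satisfy: 0 ≤ r ≤ s ≤ t, t ≥ 2, m_i ≥ 1, ∑ m_i = n + 2, and (1-d)^{n+2} = 1 - r - d(t-s) + ∑_{i=1}^r (1-d)^{m_i}. Then r + (t - s) = 0, i.e., r = 0 and s = t. -/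
/-!
Write `d = e + 1` and `m i = p i + 1`. If `r + (t - s) ≥ 1`, the triangle inequality bounds
`e ^ (n + 2) = |(1 - d) ^ (n + 2)|` by `r + d (t - s) - 1 + ∑_{i < r} e ^ (p i + 1)`. Convexity of
`k ↦ e ^ k` gives `∑_{i < r} e ^ (p i + 1) ≤ e ^ (∑_{i < r} p i + 1) + (r - 1) e`, and
`∑_{i < r} p i ≤ n + 2 - t`, `r + (t - s) ≤ t`; together
`e ^ (n + 2) ≤ (e + 1) (t - 1) + e ^ (n + 3 - t)`, which is false for `e ≥ 2`, `n ≥ 2` and `2 ≤ t ≤ n + 2`.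
-/

open Finset

theorem pow_succ_add_pow_succ_le {x : ℕ} (hx : 1 ≤ x) (a b : ℕ) :
    x ^ (a + 1) + x ^ (b + 1) ≤ x ^ (a + b + 1) + x := by
  have ha : 1 ≤ x ^ a := Nat.one_le_pow _ _ hx
  have hb : 1 ≤ x ^ b := Nat.one_le_pow _ _ hx
  -- the difference of the two sides is `x (x ^ a - 1) (x ^ b - 1)`
  have hprod : x ^ a + x ^ b ≤ x ^ a * x ^ b + 1 := by nlinarith
  calc x ^ (a + 1) + x ^ (b + 1) = x * (x ^ a + x ^ b) := by ring
    _ ≤ x * (x ^ a * x ^ b + 1) := Nat.mul_le_mul_left x hprod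
    _ = x ^ (a + b + 1) + x := by ring

theorem sum_pow_succ_add_le {ι : Type*} (s : Finset ι) (p : ι → ℕ) {x : ℕ} (hx : 1 ≤ x) :
    ∑ i ∈ s, x ^ (p i + 1) + x ≤ x ^ (∑ i ∈ s, p i + 1) + #s * x := by
  classical
  induction s using Finset.induction_on with
  | empty => simp
  | insert j s hj ih =>
    rw [sum_insert hj, sum_insert hj, card_insert_of_notMem hj]
    have := pow_succ_add_pow_succ_le hx (p j) (∑ i ∈ s, p i)
    linarith

theorem succ_mul_succ_add_one_le_pow {e : ℕ} (he : 2 ≤ e) (k : ℕ) :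
    (e + 1) * (k + 1) + 1 ≤ e ^ (k + 2) := by
  induction k with
  | zero => rw [zero_add, pow_two]; nlinarith
  | succ k ih =>
    have : e ^ 2 ≤ e ^ (k + 2) := Nat.pow_le_pow_right (by omega) (by omega)
    rw [pow_succ]
    nlinarith [pow_two e]

theorem succ_mul_add_pow_lt_pow {e a b : ℕ} (he : 2 ≤ e) (ha : 1 ≤ a) (hb : 1 ≤ b)
    (hab : 4 ≤ a + b) : (e + 1) * a + e ^ b < e ^ (a + b) := by
  obtain ⟨a, rfl⟩ : ∃ c, a = c + 1 := ⟨a - 1, by omega⟩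
  obtain rfl | hb2 := eq_or_lt_of_le hb
  · obtain ⟨k, rfl⟩ : ∃ k, a = k + 2 := ⟨a - 2, by omega⟩
    have hlin := Nat.mul_le_mul_right (e * e) (succ_mul_succ_add_one_le_pow he k)
    have hsq : 4 ≤ e * e := Nat.mul_le_mul he he
    have hsq_mul := Nat.mul_le_mul_left ((e + 1) * (k + 1)) hsq
    rw [pow_one, show e ^ (k + 2 + 1 + 1) = e ^ (k + 2) * (e * e) by ring]
    nlinarith
  · obtain ⟨c, rfl⟩ : ∃ c, b = c + 2 := ⟨b - 2, by omega⟩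
    have hlin := succ_mul_succ_add_one_le_pow he a
    have h1 : e ^ (a + 2) ≤ e ^ (a + c + 2) := Nat.pow_le_pow_right (by omega) (by omega)
    have h2 : e ^ (c + 2) ≤ e ^ (a + c + 2) := Nat.pow_le_pow_right (by omega) (by omega)
    have h3 := Nat.mul_le_mul_left (e ^ (a + c + 2)) he
    rw [show e ^ (a + 1 + (c + 2)) = e ^ (a + c + 2) * e by ring]
    omega

theorem pow_add_one_le_of_eq_one_sub_add_sum {e n r u : ℕ} {m : ℕ → ℕ} (hru : 1 ≤ r + u)
    (h : (-(e : ℤ)) ^ n = 1 - r - (e + 1) * u + ∑ i ∈ range r, (-(e : ℤ)) ^ m i) :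
    e ^ n + 1 ≤ r + (e + 1) * u + ∑ i ∈ range r, e ^ m i := by
  have hlin : |1 - (r : ℤ) - (e + 1) * u| = r + (e + 1) * u - 1 := by
    have : (1 : ℤ) ≤ r + u := by exact_mod_cast hru
    rw [abs_of_nonpos (by nlinarith), neg_sub]
    ring
  have hz : (e : ℤ) ^ n ≤ r + (e + 1) * u - 1 + ∑ i ∈ range r, (e : ℤ) ^ m i :=
    calc (e : ℤ) ^ n = |(-(e : ℤ)) ^ n| := by simp [abs_pow]
      _ = |1 - r - (e + 1) * u + ∑ i ∈ range r, (-(e : ℤ)) ^ m i| := by rw [h]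
      _ ≤ |1 - (r : ℤ) - (e + 1) * u| + |∑ i ∈ range r, (-(e : ℤ)) ^ m i| :=
        abs_add_le _ _
      _ ≤ |1 - (r : ℤ) - (e + 1) * u| + ∑ i ∈ range r, |(-(e : ℤ)) ^ m i| := by
        gcongr
        exact abs_sum_le_sum_abs _ _
      _ = r + (e + 1) * u - 1 + ∑ i ∈ range r, (e : ℤ) ^ m i := by simp [hlin, abs_pow]
  zify
  linarith

theorem stmt_15 (d n r s t : ℕ) (hd : 3 ≤ d) (hn : 2 ≤ n)
    (hrs : r ≤ s) (hst : s ≤ t) (ht : 2 ≤ t)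
    (m : ℕ → ℕ) (hm : ∀ i < t, 1 ≤ m i) (hsum : ∑ i ∈ Finset.range t, m i = n + 2)
    (heq : ((1 : ℤ) - d) ^ (n + 2) =
      1 - r - d * ((t : ℤ) - s) + ∑ i ∈ Finset.range r, ((1 : ℤ) - d) ^ (m i)) :
    r = 0 ∧ s = t := by
  obtain ⟨e, rfl⟩ : ∃ e, d = e + 1 := ⟨d - 1, by omega⟩
  obtain ⟨u, rfl⟩ : ∃ u, t = s + u := ⟨t - s, by omega⟩
  obtain ⟨a, hsu⟩ : ∃ a, s + u = a + 1 := ⟨s + u - 1, by omega⟩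
  by_contra hne
  set p : ℕ → ℕ := fun i => m i - 1
  have hmp : ∀ i < s + u, m i = p i + 1 := fun i hi => (Nat.sub_add_cancel (hm i hi)).symm
  have hpsum : ∑ i ∈ range (s + u), p i + (s + u) = n + 2 := by
    rw [← hsum, sum_congr rfl fun i hi => hmp i (mem_range.1 hi), sum_add_distrib, sum_const,
      card_range, smul_eq_mul, mul_one]
  have hpr : ∑ i ∈ range r, p i ≤ ∑ i ∈ range (s + u), p i :=
    sum_le_sum_of_subset (range_subset_range.2 (by omega))
  have hmr : ∑ i ∈ range r, e ^ m i = ∑ i ∈ range r, e ^ (p i + 1) :=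
    sum_congr rfl fun i hi => by rw [hmp i ((mem_range.1 hi).trans_le (by omega))]
  have heq' : (-(e : ℤ)) ^ (n + 2) =
      1 - r - (e + 1) * u + ∑ i ∈ range r, (-(e : ℤ)) ^ m i := by
    push_cast at heq
    simpa using heq
  have htri := pow_add_one_le_of_eq_one_sub_add_sum (by omega) heq'
  have hconv := sum_pow_succ_add_le (range r) p (by omega : 1 ≤ e)
  have hexp : e ^ (∑ i ∈ range r, p i + 1) ≤ e ^ (n + 2 - a) :=
    Nat.pow_le_pow_right (by omega) (by omega)
  have hmul : (e + 1) * (r + u) ≤ (e + 1) * (a + 1) := Nat.mul_le_mul_left _ (by omega)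
  have hlt := succ_mul_add_pow_lt_pow (e := e) (a := a) (b := n + 2 - a) (by omega) (by omega)
    (by omega) (by omega)
  rw [show a + (n + 2 - a) = n + 2 by omega] at hlt
  rw [card_range] at hconv
  linarith
end
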